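/- Let T act on S¹ ∧ X with trivial action on S¹. Then for each (t,x), the T(t,x)-fixed subspace of L²(S¹ ∧ X) equals S¹ ∧ (L²X)^{T(t,x)}, viewed inside L²(S¹ ∧ X) as the loops γ = (γ₁, γ₂) with γ₁ constant and γ₂ ∈ (L²X)^{T(t,x)}, modulo the wedge identification. -/

import Mathlib

/-!
Since `T(t,x)` surjects onto `𝕋²`, a fixed loop is determined by its value at `0`:
`γ(g₁) = g₂ · γ(0)` for `g ∈ T(t,x)`. If `γ(0)` lies on the wedge, so does every `γ(s)`, and `γ`
is the constant loop at the basepoint. Otherwise `γ(0) = w ∧ x` with `w ≠ 0`, `x ≠ x₀`; the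
action preserves the complement of the wedge, on which `(w, z) ↦ w ∧ z` is injective, so
`γ = w ∧ δ` with `δ(g₁) = g₂ · x` well defined and `T(t,x)`-fixed.
-/

noncomputable section

/-- The circle `𝕋 = ℝ/ℤ`. -/
abbrev 𝕊 : Type := UnitAddCircle

/-- The compact torus of rank `n`. -/
abbrev Tor (n : ℕ) : Type := Fin n → 𝕊

/-- The exponential map `𝔱 = ℝⁿ → T = (ℝ/ℤ)ⁿ`. -/
def expT {n : ℕ} (x : Fin n → ℝ) : Tor n := fun i => (x i : 𝕊)

/-- The two-parameter homomorphism `(r₁,r₂) ↦ (exp(r₁), exp(r₂), exp_T(x₁r₁ + x₂r₂))`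
into `𝕋² × T`. -/
def onePar {n : ℕ} (x₁ x₂ : Fin n → ℝ) (r₁ r₂ : ℝ) : (𝕊 × 𝕊) × Tor n :=
  (((r₁ : 𝕊), (r₂ : 𝕊)), expT (r₁ • x₁ + r₂ • x₂))

/-- The closed subgroup `T(t,x) ⊆ 𝕋² × T`: the closure of
`{(exp(r₁), exp(r₂), exp_T(x₁r₁ + x₂r₂)) | r₁, r₂ ∈ ℝ}`. -/
def Ttx {n : ℕ} (x₁ x₂ : Fin n → ℝ) : AddSubgroup ((𝕊 × 𝕊) × Tor n) :=
  (AddSubgroup.closure (Set.range fun p : ℝ × ℝ => onePar x₁ x₂ p.1 p.2)).topologicalClosure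

/-- The closed subgroup `T(a) = ⟨exp_T(x₁), exp_T(x₂)⟩ ⊆ T`. -/
def Ta {n : ℕ} (x₁ x₂ : Fin n → ℝ) : AddSubgroup (Tor n) :=
  (AddSubgroup.closure ({expT x₁, expT x₂} : Set (Tor n))).topologicalClosure

/-- The relation on `S¹ × X` collapsing the wedge `S¹ ∨ X = S¹ × {x₀} ∪ {0} × X` to a point. -/
def smashRel (X : Type) (x₀ : X) (p q : 𝕊 × X) : Prop :=
  p = q ∨ ((p.1 = 0 ∨ p.2 = x₀) ∧ (q.1 = 0 ∨ q.2 = x₀))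

/-- The smash product `S¹ ∧ X`. -/
def Smash (X : Type) (x₀ : X) : Type := Quot (smashRel X x₀)

/-- The quotient map `S¹ × X → S¹ ∧ X`, `(w, z) ↦ w ∧ z`. -/
def smashMk (X : Type) (x₀ : X) (p : 𝕊 × X) : Smash X x₀ := Quot.mk _ p

/-- The action of `u ∈ T` on `S¹ ∧ X` (trivial on `S¹`), assuming the basepoint is fixed. -/
def smashVAdd {n : ℕ} (X : Type) [AddAction (Tor n) X] (x₀ : X)
    (hx₀ : ∀ u : Tor n, u +ᵥ x₀ = x₀) (u : Tor n) : Smash X x₀ → Smash X x₀ :=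
  Quot.map (fun p => (p.1, u +ᵥ p.2)) (by
    rintro p q (rfl | ⟨hp, hq⟩)
    · exact Or.inl rfl
    · refine Or.inr ⟨?_, ?_⟩
      · rcases hp with h | h
        · exact Or.inl h
        · exact Or.inr (by show u +ᵥ p.2 = x₀; rw [h, hx₀])
      · rcases hq with h | h
        · exact Or.inl h
        · exact Or.inr (by show u +ᵥ q.2 = x₀; rw [h, hx₀]))

def wedge (X : Type) (x₀ : X) : Set (𝕊 × X) := {p | p.1 = 0 ∨ p.2 = x₀}

section Smash

variable {X : Type} {x₀ : X}

theorem smashRel_equivalence : Equivalence (smashRel X x₀) where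
  refl _ := Or.inl rfl
  symm := by
    rintro p q (rfl | ⟨hp, hq⟩)
    exacts [Or.inl rfl, Or.inr ⟨hq, hp⟩]
  trans := by
    rintro p q r (rfl | ⟨hp, hq⟩) (rfl | ⟨hq', hr⟩)
    exacts [Or.inl rfl, Or.inr ⟨hq', hr⟩, Or.inr ⟨hp, hq⟩, Or.inr ⟨hp, hr⟩]

theorem smashMk_eq_smashMk_iff {p q : 𝕊 × X} :
    smashMk X x₀ p = smashMk X x₀ q ↔ p = q ∨ (p ∈ wedge X x₀ ∧ q ∈ wedge X x₀) :=
  Quot.eq.trans smashRel_equivalence.eqvGen_iff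

theorem smashMk_eq_base_of_mem_wedge {p : 𝕊 × X} (hp : p ∈ wedge X x₀) :
    smashMk X x₀ p = smashMk X x₀ (0, x₀) :=
  smashMk_eq_smashMk_iff.mpr (Or.inr ⟨hp, Or.inl rfl⟩)

theorem eq_of_smashMk_eq_of_notMem_wedge {p q : 𝕊 × X} (hp : p ∉ wedge X x₀)
    (h : smashMk X x₀ p = smashMk X x₀ q) : p = q :=
  (smashMk_eq_smashMk_iff.mp h).resolve_right fun h => hp h.1

theorem smashMk_surjective : Function.Surjective (smashMk X x₀) :=
  Quot.mk_surjective

end Smash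

section Action

variable {n : ℕ} {X : Type} [AddAction (Tor n) X] {x₀ : X} (hx₀ : ∀ u : Tor n, u +ᵥ x₀ = x₀)

include hx₀ in
theorem mk_vadd_mem_wedge_iff (w : 𝕊) (u : Tor n) (x : X) :
    (w, u +ᵥ x) ∈ wedge X x₀ ↔ (w, x) ∈ wedge X x₀ := by
  simp only [wedge, Set.mem_ofPred_eq, vadd_eq_iff_eq_neg_vadd, hx₀]

theorem smashVAdd_smashMk (u : Tor n) (p : 𝕊 × X) :
    smashVAdd X x₀ hx₀ u (smashMk X x₀ p) = smashMk X x₀ (p.1, u +ᵥ p.2) :=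
  rfl

theorem eq_smashVAdd_of_forall_fixed {A : Type} [AddGroup A] {H : AddSubgroup (A × Tor n)}
    {γ : A → Smash X x₀} (hγ : ∀ g ∈ H, ∀ s, smashVAdd X x₀ hx₀ g.2 (γ (s - g.1)) = γ s)
    {g : A × Tor n} (hg : g ∈ H) : γ g.1 = smashVAdd X x₀ hx₀ g.2 (γ 0) := by
  simpa using (hγ g hg g.1).symm

theorem fixed_smash_loops_eq_range {A : Type} [AddCommGroup A] (H : AddSubgroup (A × Tor n))
    (hH : ∀ s : A, ∃ g ∈ H, g.1 = s) :
    {γ : A → Smash X x₀ | ∀ g ∈ H, ∀ s, smashVAdd X x₀ hx₀ g.2 (γ (s - g.1)) = γ s}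
      = Set.range (fun p : 𝕊 × {δ : A → X // ∀ g ∈ H, ∀ s, g.2 +ᵥ δ (s - g.1) = δ s} =>
          fun s => smashMk X x₀ (p.1, p.2.1 s)) := by
  ext γ
  constructor
  · intro hγ
    choose σ hσH hσ using hH
    obtain ⟨⟨w, x⟩, hγ₀⟩ := smashMk_surjective (γ 0)
    have hγ_eq : ∀ g ∈ H, γ g.1 = smashMk X x₀ (w, g.2 +ᵥ x) := fun g hg => by
      rw [eq_smashVAdd_of_forall_fixed hx₀ hγ hg, ← hγ₀, smashVAdd_smashMk]
    by_cases hwedge : (w, x) ∈ wedge X x₀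
    · refine ⟨(0, ⟨fun _ => x₀, fun g _ _ => hx₀ g.2⟩), funext fun s => ?_⟩
      rw [← hσ s, hγ_eq _ (hσH s), smashMk_eq_base_of_mem_wedge
        ((mk_vadd_mem_wedge_iff hx₀ _ _ _).mpr hwedge)]
    · refine ⟨(w, ⟨fun s => (σ s).2 +ᵥ x, fun g hg s => ?_⟩), funext fun s => ?_⟩
      · set k := g + σ (s - g.1)
        have hk : k.1 = s := by simp [k, hσ]
        have hγk : smashMk X x₀ (w, k.2 +ᵥ x) = smashMk X x₀ (w, (σ s).2 +ᵥ x) := by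
          rw [← hγ_eq k (add_mem hg (hσH _)), ← hγ_eq _ (hσH s), hk, hσ]
        have hnot : (w, k.2 +ᵥ x) ∉ wedge X x₀ := by
          rwa [mk_vadd_mem_wedge_iff hx₀]
        show g.2 +ᵥ (σ (s - g.1)).2 +ᵥ x = (σ s).2 +ᵥ x
        rw [vadd_vadd]
        exact congrArg Prod.snd (eq_of_smashMk_eq_of_notMem_wedge hnot hγk)
      · rw [← hσ s, hγ_eq _ (hσH s), hσ]
  · rintro ⟨⟨w, δ, hδ⟩, rfl⟩ g hg s
    simp only [smashVAdd_smashMk, hδ g hg s]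

end Action

theorem exists_mem_Ttx_fst_eq {n : ℕ} (x₁ x₂ : Fin n → ℝ) (s : 𝕊 × 𝕊) :
    ∃ g ∈ Ttx x₁ x₂, g.1 = s := by
  obtain ⟨r₁, hr₁⟩ := QuotientAddGroup.mk_surjective s.1
  obtain ⟨r₂, hr₂⟩ := QuotientAddGroup.mk_surjective s.2
  exact ⟨onePar x₁ x₂ r₁ r₂, AddSubgroup.le_topologicalClosure _
    (AddSubgroup.subset_closure ⟨(r₁, r₂), rfl⟩), Prod.ext hr₁ hr₂⟩

theorem stmt_14_general {n : ℕ} (X : Type)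
    [AddAction (Tor n) X]
    (x₀ : X) (hx₀ : ∀ u : Tor n, u +ᵥ x₀ = x₀) (x₁ x₂ : Fin n → ℝ) :
    {γ : 𝕊 × 𝕊 → Smash X x₀ |
        ∀ g ∈ Ttx x₁ x₂, ∀ s, smashVAdd X x₀ hx₀ g.2 (γ (s - g.1)) = γ s}
      = Set.range (fun p : 𝕊 × {δ : 𝕊 × 𝕊 → X //
            ∀ g ∈ Ttx x₁ x₂, ∀ s, g.2 +ᵥ δ (s - g.1) = δ s} =>
          fun s => smashMk X x₀ (p.1, p.2.1 s)) :=
  fixed_smash_loops_eq_range hx₀ _ (exists_mem_Ttx_fst_eq x₁ x₂)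

/-- Let `T` act on `S¹ ∧ X` with trivial action on `S¹`.  Then the
`T(t,x)`-fixed subspace of `L²(S¹ ∧ X)` equals `S¹ ∧ (L²X)^{T(t,x)}`, viewed inside
`L²(S¹ ∧ X)` via `(w, γ) ↦ (s ↦ w ∧ γ(s))`. -/
theorem stmt_14 {n : ℕ} (X : Type) [TopologicalSpace X]
    [AddAction (Tor n) X] [ContinuousVAdd (Tor n) X]
    (x₀ : X) (hx₀ : ∀ u : Tor n, u +ᵥ x₀ = x₀) (x₁ x₂ : Fin n → ℝ) :
    {γ : 𝕊 × 𝕊 → Smash X x₀ |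
        ∀ g ∈ Ttx x₁ x₂, ∀ s, smashVAdd X x₀ hx₀ g.2 (γ (s - g.1)) = γ s}
      = Set.range (fun p : 𝕊 × {δ : 𝕊 × 𝕊 → X //
            ∀ g ∈ Ttx x₁ x₂, ∀ s, g.2 +ᵥ δ (s - g.1) = δ s} =>
          fun s => smashMk X x₀ (p.1, p.2.1 s)) :=
  stmt_14_general X x₀ hx₀ x₁ x₂
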